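/- arXiv:0909.3789 — 4 statements merged into one kernel-verified Lean document; each statement's English description precedes it below -/
import Mathlib

section
/- (Strong Principal Minor Theorem for symmetric F2 matrices, one direction plus converse) Let A be a symmetric matrix over F2 of rank r, and X a set of r column indices. Then the columns of A indexed by X are linearly independent if and only if the principal submatrix A[X] has determinant 1. -/
/-!
If `A[X]` is nonsingular, its columns are independent, hence so are the columns of `A` indexed
by `X`, of which they are restrictions. Conversely, `|X| = rank A` independent columns span the
column space; by symmetry the rows indexed by `X` then span the row space, so a vector killed by
the rows of `A[X]` is killed by every row of the column submatrix `A[·, X]`, and independence of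
its columns forces the vector to vanish. Over `F₂`, nonsingular means determinant `1`.
-/

open Matrix

def psub {V : Type*} [DecidableEq V] {K : Type*} [Field K]
    (A : Matrix V V K) (X : Finset V) :
    Matrix {v // v ∈ X} {v // v ∈ X} K :=
  A.submatrix Subtype.val Subtype.val

open Submodule Set

namespace Matrix

variable {m n ι K : Type*} [Field K]

theorem linearIndependent_col_comp_of_det_submatrix_ne_zero [Fintype ι] [DecidableEq ι]
    (A : Matrix m n K) (f : ι → m) (g : ι → n) (h : (A.submatrix f g).det ≠ 0) :
    LinearIndependent K (A.col ∘ g) :=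
  LinearIndependent.of_comp (LinearMap.funLeft K K f)
    ((A.submatrix f g).linearIndependent_cols_of_isUnit ((isUnit_iff_isUnit_det _).2 h.isUnit))

theorem span_row_comp_eq_of_linearIndependent [Fintype ι] [Finite m] [Fintype n]
    (A : Matrix m n K) (f : ι → m) (hf : LinearIndependent K (A.row ∘ f))
    (hcard : Fintype.card ι = A.rank) :
    span K (range (A.row ∘ f)) = span K (range A.row) := by
  refine eq_of_le_of_finrank_le (span_mono (range_comp_subset_range f A.row)) ?_
  rw [← rank_eq_finrank_span_row, finrank_span_eq_card hf, hcard]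

theorem span_row_comp_submatrix_eq {ι' : Type*} (A : Matrix m n K) (f : ι → m) (g : ι' → n)
    (hspan : span K (range (A.row ∘ f)) = span K (range A.row)) :
    span K (range ((A.submatrix id g).row ∘ f)) = span K (range (A.submatrix id g).row) := by
  have := congrArg (fun p : Submodule K (n → K) => p.map (LinearMap.funLeft K K g)) hspan
  simp only [map_span, ← range_comp] at this
  exact this

theorem mulVec_eq_zero_of_span_row_comp_eq [Fintype n] (A : Matrix m n K) (f : ι → m)
    (hspan : span K (range (A.row ∘ f)) = span K (range A.row)) {v : n → K}
    (hv : ∀ i, (A *ᵥ v) (f i) = 0) : A *ᵥ v = 0 := by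
  have hle : span K (range A.row) ≤ LinearMap.ker ((dotProductBilin K K).flip v) := by
    rw [← hspan, span_le]
    rintro _ ⟨i, rfl⟩
    exact hv i
  funext w
  exact hle (subset_span ⟨w, rfl⟩)

theorem det_submatrix_ne_zero_of_linearIndependent_col_comp [Fintype n] [Fintype ι]
    [DecidableEq ι] {A : Matrix n n K} (hA : A.IsSymm) (f : ι → n)
    (hf : LinearIndependent K (A.col ∘ f)) (hcard : Fintype.card ι = A.rank) :
    (A.submatrix f f).det ≠ 0 := by
  have hrow : LinearIndependent K (A.row ∘ f) := by rwa [← hA.eq] at hf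
  have hspan := span_row_comp_submatrix_eq A f f
    (span_row_comp_eq_of_linearIndependent A f hrow hcard)
  rw [Ne, ← exists_mulVec_eq_zero_iff]
  rintro ⟨v, hv0, hv⟩
  have hcolv : A.submatrix id f *ᵥ v = 0 :=
    mulVec_eq_zero_of_span_row_comp_eq _ f hspan fun i => congrFun hv i
  exact hv0 (mulVec_injective_iff.2 hf (hcolv.trans (mulVec_zero _).symm))

end Matrix

theorem zmod_two_ne_zero_iff (a : ZMod 2) : a ≠ 0 ↔ a = 1 := by
  revert a
  decide

theorem stmt11 {V : Type*} [Fintype V] [DecidableEq V] (A : Matrix V V (ZMod 2))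
    (hA : A.IsSymm) (X : Finset V) (hcard : X.card = A.rank) :
    LinearIndependent (ZMod 2) (fun x : {v // v ∈ X} => Aᵀ x.1) ↔
      (psub A X).det = 1 := by
  rw [← zmod_two_ne_zero_iff]
  exact ⟨fun h => A.det_submatrix_ne_zero_of_linearIndependent_col_comp hA Subtype.val h
      (by rwa [Fintype.card_coe]),
    A.linearIndependent_col_comp_of_det_submatrix_ne_zero Subtype.val Subtype.val⟩
end

section
/- Let G be a symmetric V×V matrix over F2 of rank r. Every maximal element (with respect to set inclusion) of the family {X ⊆ V : det G[X] = 1} has cardinality exactly r. -/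
/-!
A nonsingular principal submatrix `G[X]` has rank `|X|`, so `|X| ≤ rank G`. If `|X| < rank G`,
the Schur complement `S = G - G[·,X] G[X]⁻¹ G[X,·]`, which vanishes on the rows and columns
indexed by `X`, cannot be zero, since otherwise `G` factors through `X`. `S` is symmetric, and over
`𝔽₂` a symmetric matrix with a nonzero entry `S x y` has a nonsingular principal submatrix on
`{x}`, `{y}` or `{x, y}` (the last one being `!![0, 1; 1, 0]`). As
`det G[X ∪ W] = det G[X] · det S[W]`, this enlarges `X`, contradicting maximality.
-/

open Matrix

section SchurComplement

variable {K V : Type*} [Field K] [DecidableEq V]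

noncomputable def schurCompl (G : Matrix V V K) (X : Finset V) : Matrix V V K :=
  G - (G.submatrix id (↑) : Matrix V X K) * (psub G X)⁻¹ *
    (G.submatrix (↑) id : Matrix X V K)

variable {G : Matrix V V K} {X : Finset V}

lemma schurCompl_apply_of_mem_left (hX : IsUnit (psub G X).det) {x : V} (hx : x ∈ X) (y : V) :
    schurCompl G X x y = 0 := by
  -- row `x` of `G[·,X]` is row `x` of `G[X]`
  have h : ((G.submatrix id (↑) : Matrix V X K) * (psub G X)⁻¹ *
      (G.submatrix (↑) id : Matrix X V K)) x y =
      (psub G X * (psub G X)⁻¹ * (G.submatrix (↑) id : Matrix X V K)) ⟨x, hx⟩ y := rfl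
  rw [schurCompl, Matrix.sub_apply, h, mul_nonsing_inv _ hX, Matrix.one_mul, submatrix_apply]
  exact sub_self _

lemma schurCompl_apply_of_mem_right (hX : IsUnit (psub G X).det) (x : V) {y : V} (hy : y ∈ X) :
    schurCompl G X x y = 0 := by
  have h : ((G.submatrix id (↑) : Matrix V X K) * ((psub G X)⁻¹ *
      (G.submatrix (↑) id : Matrix X V K))) x y =
      ((G.submatrix id (↑) : Matrix V X K) * ((psub G X)⁻¹ * psub G X)) x ⟨y, hy⟩ := rfl
  rw [schurCompl, Matrix.sub_apply, Matrix.mul_assoc, h, nonsing_inv_mul _ hX, Matrix.mul_one,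
    submatrix_apply]
  exact sub_self _

lemma rank_le_card_of_schurCompl_eq_zero [Fintype V] (h : schurCompl G X = 0) :
    G.rank ≤ X.card := by
  rw [schurCompl, sub_eq_zero, Matrix.mul_assoc] at h
  calc G.rank ≤ (G.submatrix id (↑) : Matrix V X K).rank := by
        conv_lhs => rw [h]
        exact rank_mul_le_left _ _
    _ ≤ X.card := (rank_le_card_width _).trans_eq (Fintype.card_coe X)

lemma exists_schurCompl_ne_zero [Fintype V] (hX : IsUnit (psub G X).det)
    (hlt : X.card < G.rank) : ∃ x ∉ X, ∃ y ∉ X, schurCompl G X x y ≠ 0 := by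
  obtain ⟨x, y, hxy⟩ : ∃ x y, schurCompl G X x y ≠ 0 := by
    by_contra! h
    exact hlt.not_ge (rank_le_card_of_schurCompl_eq_zero (ext h))
  exact ⟨x, fun hx => hxy (schurCompl_apply_of_mem_left hX hx y),
    y, fun hy => hxy (schurCompl_apply_of_mem_right hX x hy), hxy⟩

lemma card_le_rank_of_isUnit_det_psub [Fintype V] (hX : IsUnit (psub G X).det) :
    X.card ≤ G.rank := by
  rw [← Fintype.card_coe X, ← rank_of_isUnit _ ((isUnit_iff_isUnit_det _).mpr hX)]
  exact rank_submatrix_le G _ _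

lemma isSymm_schurCompl (hG : G.IsSymm) (X : Finset V) : (schurCompl G X).IsSymm := by
  have hA : (psub G X).IsSymm := hG.submatrix _
  rw [IsSymm, schurCompl, transpose_sub, transpose_mul, transpose_mul, transpose_nonsing_inv,
    transpose_submatrix, transpose_submatrix, hA.eq, hG.eq, Matrix.mul_assoc]

lemma det_psub_union (hX : IsUnit (psub G X).det) {W : Finset V} (h : Disjoint X W) :
    (psub G (X ∪ W)).det = (psub G X).det * (psub (schurCompl G X) W).det := by
  have : Invertible (psub G X) := (psub G X).invertibleOfIsUnitDet hX
  have hblocks : (psub G (X ∪ W)).submatrix (Equiv.Finset.union X W h)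
      (Equiv.Finset.union X W h) = fromBlocks (psub G X) (G.submatrix (↑) (↑))
        (G.submatrix (↑) (↑)) (psub G W) := by
    ext (i | i) (j | j) <;> rfl
  rw [← det_submatrix_equiv_self (Equiv.Finset.union X W h), hblocks, det_fromBlocks₁₁,
    invOf_eq_nonsing_inv]
  rfl

lemma det_psub_singleton (A : Matrix V V K) (u : V) : (psub A {u}).det = A u u :=
  det_eq_elem_of_subsingleton _ (⟨u, Finset.mem_singleton_self u⟩ : ({u} : Finset V))

lemma det_psub_pair (A : Matrix V V K) {x y : V} (hxy : x ≠ y) :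
    (psub A {x, y}).det = A x x * A y y - A x y * A y x := by
  let e : Fin 2 ≃ ({x, y} : Finset V) :=
    { toFun := ![⟨x, by simp⟩, ⟨y, by simp⟩]
      invFun := fun v => if v.val = x then 0 else 1
      left_inv := by
        intro i
        fin_cases i <;> simp [hxy.symm]
      right_inv := by
        rintro ⟨v, hv⟩
        rcases Finset.mem_insert.mp hv with rfl | hv
        · simp
        · obtain rfl := Finset.mem_singleton.mp hv
          simp [hxy.symm] }
  rw [← det_submatrix_equiv_self e, det_fin_two]
  rfl

end SchurComplement

lemma exists_det_psub_eq_one_of_apply_ne_zero {V : Type*} [DecidableEq V]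
    {S : Matrix V V (ZMod 2)} (hS : S.IsSymm) {x y : V} (hxy : S x y ≠ 0) :
    ∃ W ⊆ {x, y}, W.Nonempty ∧ (psub S W).det = 1 := by
  have eq_one : ∀ a : ZMod 2, a ≠ 0 → a = 1 := by decide
  by_cases hx : S x x = 0
  · by_cases hy : S y y = 0
    · have hne : x ≠ y := by rintro rfl; exact hxy hx
      refine ⟨{x, y}, subset_rfl, Finset.insert_nonempty _ _, ?_⟩
      rw [det_psub_pair S hne, hx, hy, hS.apply x y, eq_one _ hxy]
      decide
    · exact ⟨{y}, by simp, Finset.singleton_nonempty y,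
        by rw [det_psub_singleton, eq_one _ hy]⟩
  · exact ⟨{x}, by simp, Finset.singleton_nonempty x, by rw [det_psub_singleton, eq_one _ hx]⟩

theorem stmt12 {V : Type*} [Fintype V] [DecidableEq V] (G : Matrix V V (ZMod 2))
    (hG : G.IsSymm) (X : Finset V) (hX : (psub G X).det = 1)
    (hmax : ∀ Y : Finset V, X ⊂ Y → (psub G Y).det ≠ 1) :
    X.card = G.rank := by
  have hXunit : IsUnit (psub G X).det := hX ▸ isUnit_one
  refine le_antisymm (card_le_rank_of_isUnit_det_psub hXunit) (not_lt.mp fun hlt => ?_)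
  obtain ⟨x, hx, y, hy, hxy⟩ := exists_schurCompl_ne_zero hXunit hlt
  obtain ⟨W, hWxy, ⟨w, hw⟩, hW⟩ :=
    exists_det_psub_eq_one_of_apply_ne_zero (isSymm_schurCompl hG X) hxy
  have hdisj : Disjoint X W :=
    Finset.disjoint_of_subset_right hWxy (by simp [Finset.disjoint_insert_right, hx, hy])
  refine hmax (X ∪ W) ?_ (by rw [det_psub_union hXunit hdisj, hX, hW, one_mul])
  exact (Finset.ssubset_iff_of_subset Finset.subset_union_left).mpr
    ⟨w, Finset.mem_union_right X hw, Finset.disjoint_right.mp hdisj hw⟩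
end

section
/- Let G be a symmetric V×V matrix over F2 and X ⊆ V. Then X is a basis of the column space of G (i.e., a maximal linearly independent set of columns) if and only if X is a maximal element of {Y ⊆ V : det G[Y] = 1} under inclusion. -/
/-!
If `G[X]` is invertible, the Schur complement `S = G - G[·,X] G[X]⁻¹ G[X,·]` vanishes on the rows
and columns indexed by `X`, and `det G[X ∪ Z] = det G[X] · det S[Z]`. Maximality of `X` therefore
kills every principal `1 × 1` and `2 × 2` minor of the symmetric matrix `S` outside `X`, which
forces `S = 0`; then `G` factors through the rows indexed by `X`, so `rank G ≤ |X|`. Conversely,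
if the rows indexed by `X` form a basis of the row space, writing `G = A G[X,·]` and using symmetry
gives `G[X,·] = G[X] Aᵀ`, so `G[X]` is invertible; and no larger `Y` can have `G[Y]` invertible,
since that would give `|Y|` independent rows.
-/

open Matrix

namespace Matrix

variable {V K : Type*} [Field K] {G : Matrix V V K} {X : Finset V}

lemma mem_span_rows_of_linearIndependent [Fintype V]
    (hli : LinearIndependent K (fun x : X => G x)) (hcard : X.card = G.rank) (v : V) :
    G v ∈ Submodule.span K (Set.range fun x : X => G x) := by
  have hspan : Submodule.span K (Set.range fun x : X => G x) = Submodule.span K (Set.range G) := by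
    refine Submodule.eq_of_le_of_finrank_le
      (Submodule.span_mono (Set.range_subset_iff.mpr fun x => ⟨x, rfl⟩)) ?_
    rw [finrank_span_eq_card hli, Fintype.card_coe, hcard, rank_eq_finrank_span_row]
    rfl
  exact hspan ▸ Submodule.subset_span ⟨v, rfl⟩

variable [DecidableEq V]

lemma card_le_rank_of_isUnit_det_psub [Fintype V] (hX : IsUnit (psub G X).det) : X.card ≤ G.rank :=
  calc X.card = (psub G X).rank := by
        rw [rank_of_isUnit _ ((isUnit_iff_isUnit_det _).mpr hX), Fintype.card_coe]
    _ ≤ G.rank := rank_submatrix_le _ _ _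

lemma linearIndependent_rows_of_isUnit_det_psub (hX : IsUnit (psub G X).det) :
    LinearIndependent K (fun x : X => G x) :=
  LinearIndependent.of_comp (LinearMap.funLeft K K Subtype.val)
    (linearIndependent_rows_iff_isUnit.mpr ((isUnit_iff_isUnit_det _).mpr hX))

lemma IsSymm.isUnit_det_psub_of_linearIndependent [Fintype V] (hG : G.IsSymm)
    (hli : LinearIndependent K (fun x : X => G x)) (hcard : X.card = G.rank) :
    IsUnit (psub G X).det := by
  set R : Matrix X V K := G.submatrix (↑) id
  obtain ⟨A, hA⟩ : ∃ A : Matrix V X K, G = A * R := by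
    choose A hA using fun v =>
      (Submodule.mem_span_range_iff_exists_fun K).mp
        (mem_span_rows_of_linearIndependent hli hcard v)
    refine ⟨of A, ?_⟩
    ext v w
    simp [← hA v, R, mul_apply, Finset.sum_apply]
  have hfac : R = psub G X * Aᵀ :=
    calc R = Gᵀ.submatrix (↑) id := by rw [hG.eq]
      _ = Rᵀ.submatrix (↑) id * Aᵀ := by
          rw [hA, transpose_mul, submatrix_mul _ _ _ id _ Function.bijective_id]; rfl
      _ = psub G X * Aᵀ := by
          congr 1
          ext
          simp [R, psub, hG.apply]
  rw [← isUnit_iff_isUnit_det, ← linearIndependent_rows_iff_isUnit]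
  have hrows : LinearIndependent K (psub G X * Aᵀ).row := hfac ▸ hli
  exact hrows.of_comp (vecMulLinear Aᵀ)

noncomputable def schurComplement (G : Matrix V V K) (X : Finset V) : Matrix V V K :=
  G - G.submatrix id ((↑) : X → V) * (psub G X)⁻¹ * G.submatrix ((↑) : X → V) id

lemma schurComplement_submatrix {ι κ : Type*} (r : ι → V) (c : κ → V) :
    (schurComplement G X).submatrix r c =
      G.submatrix r c -
        G.submatrix r ((↑) : X → V) * (psub G X)⁻¹ * G.submatrix ((↑) : X → V) c :=
  rfl

lemma schurComplement_submatrix_val_right (hX : IsUnit (psub G X).det) :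
    (schurComplement G X).submatrix id ((↑) : X → V) = 0 := by
  rw [schurComplement_submatrix, Matrix.mul_assoc,
    show G.submatrix ((↑) : X → V) ((↑) : X → V) = psub G X from rfl, nonsing_inv_mul _ hX,
    Matrix.mul_one, sub_self]

lemma IsSymm.schurComplement (hG : G.IsSymm) (X : Finset V) : (schurComplement G X).IsSymm := by
  have hA : (psub G X)⁻¹ᵀ = (psub G X)⁻¹ := by
    rw [transpose_nonsing_inv, show (psub G X)ᵀ = psub G X from (hG.submatrix _).eq]
  rw [IsSymm, Matrix.schurComplement, transpose_sub, transpose_mul, transpose_mul, hA,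
    Matrix.mul_assoc, transpose_submatrix, transpose_submatrix, hG.eq]

lemma schurComplement_apply_eq_zero (hG : G.IsSymm) (hX : IsUnit (psub G X).det) {v w : V}
    (hvw : v ∈ X ∨ w ∈ X) : schurComplement G X v w = 0 := by
  have hright : ∀ v, ∀ w ∈ X, schurComplement G X v w = 0 := fun v w hw =>
    congrFun (congrFun (schurComplement_submatrix_val_right hX) v) ⟨w, hw⟩
  rcases hvw with hv | hw
  · rw [(hG.schurComplement X).apply]
    exact hright w v hv
  · exact hright v w hw

lemma det_submatrix_sumElim (hX : IsUnit (psub G X).det) {ι : Type*} [Fintype ι]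
    [DecidableEq ι] (g : ι → V) :
    (G.submatrix (Sum.elim (↑) g) (Sum.elim ((↑) : X → V) g)).det =
      (psub G X).det * ((schurComplement G X).submatrix g g).det := by
  let := invertibleOfIsUnitDet _ hX
  have hblocks : G.submatrix (Sum.elim (↑) g) (Sum.elim ((↑) : X → V) g) =
      fromBlocks (psub G X) (G.submatrix ((↑) : X → V) g) (G.submatrix g ((↑) : X → V))
        (G.submatrix g g) := by
    ext (i | i) (j | j) <;> rfl
  rw [hblocks, det_fromBlocks₁₁, invOf_eq_nonsing_inv, schurComplement_submatrix]

lemma det_psub_image {ι : Type*} [Fintype ι] [DecidableEq ι] {f : ι → V}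
    (hf : Function.Injective f) : (psub G (Finset.univ.image f)).det = (G.submatrix f f).det := by
  let e : ι ≃ Finset.univ.image f :=
    Equiv.ofBijective (fun i => (⟨f i, by simp⟩ : Finset.univ.image f))
      ⟨fun i j h => hf (congrArg Subtype.val h), fun v => by
        obtain ⟨i, -, hi⟩ := Finset.mem_image.mp v.2
        exact ⟨i, Subtype.ext hi⟩⟩
  exact (det_submatrix_equiv_self e (psub G _)).symm

lemma det_schurComplement_submatrix_eq_zero (hX : IsUnit (psub G X).det)
    (hmax : ∀ Y : Finset V, X ⊂ Y → (psub G Y).det = 0) {ι : Type*} [Fintype ι]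
    [DecidableEq ι] [Nonempty ι] {g : ι → V} (hg : Function.Injective g) (hgX : ∀ i, g i ∉ X) :
    ((schurComplement G X).submatrix g g).det = 0 := by
  have hf : Function.Injective (Sum.elim ((↑) : X → V) g) :=
    Subtype.val_injective.sumElim hg fun x i h => hgX i (h ▸ x.2)
  have hXY : X ⊂ Finset.univ.image (Sum.elim ((↑) : X → V) g) := by
    obtain ⟨i⟩ := ‹Nonempty ι›
    refine (Finset.ssubset_iff_of_subset fun x hx => ?_).mpr
      ⟨g i, Finset.mem_image_of_mem _ (Finset.mem_univ (Sum.inr i)), hgX i⟩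
    exact Finset.mem_image_of_mem _ (Finset.mem_univ (Sum.inl ⟨x, hx⟩ : X ⊕ ι))
  have h := hmax _ hXY
  rw [det_psub_image hf, det_submatrix_sumElim hX] at h
  exact (mul_eq_zero.mp h).resolve_left hX.ne_zero

lemma schurComplement_eq_zero (hG : G.IsSymm) (hX : IsUnit (psub G X).det)
    (hmax : ∀ Y : Finset V, X ⊂ Y → (psub G Y).det = 0) : schurComplement G X = 0 := by
  have hS := hG.schurComplement X
  set S := schurComplement G X
  have hdiag : ∀ v ∉ X, S v v = 0 := fun v hv => by
    have h := det_schurComplement_submatrix_eq_zero hX hmax (g := ![v])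
      (Function.injective_of_subsingleton _) (by simpa using hv)
    rwa [det_fin_one] at h
  ext v w
  by_cases hvw : v ∈ X ∨ w ∈ X
  · exact schurComplement_apply_eq_zero hG hX hvw
  obtain ⟨hv, hw⟩ := not_or.mp hvw
  obtain rfl | hne := eq_or_ne v w
  · exact hdiag v hv
  -- `S[{v, w}]` is symmetric with zero diagonal, so its determinant is `-(S v w)²`
  have h := det_schurComplement_submatrix_eq_zero hX hmax (g := ![v, w])
    (by intro i j; fin_cases i <;> fin_cases j <;> simp [hne, hne.symm])
    (by simp [Fin.forall_fin_two, hv, hw])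
  rw [det_fin_two] at h
  change S v v * S w w - S v w * S w v = 0 at h
  rw [hdiag v hv, hdiag w hw, hS.apply v w] at h
  simpa using h

lemma rank_le_card_of_schurComplement_eq_zero [Fintype V] (h : schurComplement G X = 0) :
    G.rank ≤ X.card :=
  calc G.rank
      = (G.submatrix id ((↑) : X → V) * (psub G X)⁻¹ * G.submatrix ((↑) : X → V) id).rank :=
        congrArg rank (sub_eq_zero.mp h)
    _ ≤ (G.submatrix ((↑) : X → V) id).rank := rank_mul_le_right _ _
    _ ≤ X.card := (rank_le_card_height _).trans (Fintype.card_coe X).le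

theorem IsSymm.linearIndependent_rows_and_card_eq_rank_iff [Fintype V] (hG : G.IsSymm) :
    (LinearIndependent K (fun x : X => G x) ∧ X.card = G.rank) ↔
      IsUnit (psub G X).det ∧ ∀ Y : Finset V, X ⊂ Y → (psub G Y).det = 0 := by
  constructor
  · rintro ⟨hli, hcard⟩
    refine ⟨hG.isUnit_det_psub_of_linearIndependent hli hcard, fun Y hXY => ?_⟩
    by_contra hY
    have hYle := card_le_rank_of_isUnit_det_psub (isUnit_iff_ne_zero.mpr hY)
    have hXY := Finset.card_lt_card hXY
    omega
  · rintro ⟨hX, hmax⟩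
    exact ⟨linearIndependent_rows_of_isUnit_det_psub hX,
      (card_le_rank_of_isUnit_det_psub hX).antisymm
        (rank_le_card_of_schurComplement_eq_zero (schurComplement_eq_zero hG hX hmax))⟩

end Matrix

theorem stmt13 {V : Type*} [Fintype V] [DecidableEq V] (G : Matrix V V (ZMod 2))
    (hG : G.IsSymm) (X : Finset V) :
    (LinearIndependent (ZMod 2) (fun x : {v // v ∈ X} => Gᵀ x.1) ∧ X.card = G.rank) ↔
      ((psub G X).det = 1 ∧ ∀ Y : Finset V, X ⊂ Y → (psub G Y).det ≠ 1) := by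
  have hzero : ∀ a : ZMod 2, a = 0 ↔ a ≠ 1 := by decide
  rw [hG.eq, hG.linearIndependent_rows_and_card_eq_rank_iff]
  simp only [isUnit_iff_eq_one, hzero]
end

section
/- If G is a symmetric V×V matrix over F2 with det G = 1 (so G is invertible), then the families of maximal principal nonsingular submatrices of G+I and G⁻¹+I are equal: max{Y : det (G+I)[Y] = 1} = max{Y : det (G⁻¹+I)[Y] = 1}. -/
/-!
Expanding the determinant multilinearly row by row, `det (M + 1)[Y] = ∑_{Z ⊆ Y} det M[Z]`, and
by Jacobi's complementary minor identity `det G⁻¹[T] = det G[Tᶜ]` when `det G = 1`. Substituting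
both, and using that a set `A` has `2 ^ |Aᶜ|` supersets, an even number unless `A = V`, one finds
over `𝔽₂` that `det (G⁻¹ + 1)[Y] = ∑_{Z ⊇ Y} det (G + 1)[Z]`. If `Y` is maximal with `det (G + 1)[Y] = 1`, the
right-hand side is `1` at `Y` and `0` at every proper superset of `Y`, so `Y` is maximal for
`G⁻¹ + 1` as well; the converse is the same argument applied to `G⁻¹`.
-/

open Matrix

open Finset

namespace Matrix

variable {n R : Type*} [Fintype n] [DecidableEq n]

theorem of_piecewise_mul [NonUnitalNonAssocSemiring R] (s : Finset n) (A B C : Matrix n n R) :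
    of (s.piecewise A B) * C = of (s.piecewise (A * C) (B * C)) := by
  ext i j
  by_cases hi : i ∈ s <;> simp [Finset.piecewise, hi, mul_apply]

variable [CommRing R]

theorem det_of_piecewise_one (M : Matrix n n R) (s : Finset n) :
    (of (s.piecewise M (1 : Matrix n n R))).det = (M.toSquareBlockProp (· ∈ s)).det := by
  have hlower : ∀ i, i ∉ s → ∀ j, j ∈ s → of (s.piecewise M (1 : Matrix n n R)) i j = 0 :=
    fun i hi j hj => by simp [Finset.piecewise, hi, one_apply_ne (ne_of_mem_of_not_mem hj hi).symm]
  have hone : (of (s.piecewise M (1 : Matrix n n R))).toSquareBlockProp (· ∉ s) = 1 := by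
    ext i j
    simp [Finset.piecewise, toSquareBlockProp_def, one_apply, Subtype.ext_iff, i.2]
  have hblock : (of (s.piecewise M (1 : Matrix n n R))).toSquareBlockProp (· ∈ s)
      = M.toSquareBlockProp (· ∈ s) := by
    ext i j
    simp [Finset.piecewise, toSquareBlockProp_def]
  rw [twoBlockTriangular_det _ _ hlower, hone, hblock, det_one, mul_one]
  -- the two sides differ only in the `Fintype` instance on the subtype
  congr!

theorem det_add_one_eq_sum_det_toSquareBlockProp (M : Matrix n n R) :
    (M + 1).det = ∑ s : Finset n, (M.toSquareBlockProp (· ∈ s)).det := by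
  simp only [← det_of_piecewise_one]
  exact detRowAlternating.map_add_univ M (1 : Matrix n n R)

end Matrix

section PrincipalMinors

variable {V K : Type*} [DecidableEq V] [Field K]

theorem psub_add_one (M : Matrix V V K) (Y : Finset V) : psub (M + 1) Y = psub M Y + 1 := by
  simp [psub, submatrix_add, submatrix_one _ Subtype.val_injective]

theorem det_toSquareBlockProp_psub (M : Matrix V V K) (Y : Finset V) (s : Finset Y) :
    ((psub M Y).toSquareBlockProp (· ∈ s)).det = (psub M (s.map (.subtype _))).det := by
  let e : {a : Y // a ∈ s} ≃ {v // v ∈ s.map (.subtype _)} :=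
    (Equiv.subtypeSubtypeEquivSubtypeExists _ _).trans (Equiv.subtypeEquivRight (by simp))
  rw [← det_submatrix_equiv_self e]
  rfl

theorem det_psub_add_one (M : Matrix V V K) (Y : Finset V) :
    (psub (M + 1) Y).det = ∑ Z ∈ Y.powerset, (psub M Z).det := by
  rw [psub_add_one, det_add_one_eq_sum_det_toSquareBlockProp]
  refine sum_nbij' (fun s => s.map (.subtype _)) (fun Z => Z.subtype (· ∈ Y))
    (fun s _ => mem_powerset.2 fun _ => property_of_mem_map_subtype s) (fun _ _ => mem_univ _)
    (fun s _ => map_injective (.subtype _)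
      (subtype_map_of_mem fun _ => property_of_mem_map_subtype s))
    (fun Z hZ => subtype_map_of_mem (mem_powerset.1 hZ)) fun s _ => ?_
  exact det_toSquareBlockProp_psub M Y s

theorem det_mul_det_psub_inv [Fintype V] (G : Matrix V V K) (hG : IsUnit G.det) (Z : Finset V) :
    G.det * (psub G⁻¹ Z).det = (psub G Zᶜ).det := by
  have hprod : of (Z.piecewise G⁻¹ᵀ (1 : Matrix V V K)) * Gᵀ
      = of (Zᶜ.piecewise Gᵀ (1 : Matrix V V K)) := by
    rw [of_piecewise_mul, ← transpose_mul, mul_nonsing_inv G hG, transpose_one, one_mul]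
    exact congrArg of (Z.piecewise_compl _ _).symm
  have := congrArg det hprod
  rw [det_mul, det_of_piecewise_one, det_of_piecewise_one, det_transpose] at this
  rw [mul_comm, ← det_transpose (psub G⁻¹ Z), ← det_transpose (psub G Zᶜ)]
  exact this

end PrincipalMinors

section CharacteristicTwo

variable {α R : Type*} [Fintype α] [DecidableEq α] [CommRing R] [CharP R 2]

theorem natCast_card_Ici_finset (A : Finset α) :
    (#(Ici A) : R) = if A = univ then 1 else 0 := by
  rw [Ici_eq_Icc, top_eq_univ, card_Icc_finset (subset_univ A), card_univ, ← card_compl,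
    Nat.cast_pow, Nat.cast_ofNat, CharTwo.two_eq_zero]
  split_ifs with h
  · rw [h, compl_univ, card_empty, pow_zero]
  · exact zero_pow (by rwa [Ne, card_eq_zero, compl_eq_empty_iff])

theorem sum_Ici_sum_powerset_eq_sum_powerset_compl (f : Finset α → R) (Y : Finset α) :
    ∑ Z ∈ Ici Y, ∑ S ∈ Z.powerset, f S = ∑ T ∈ Y.powerset, f Tᶜ := by
  calc ∑ Z ∈ Ici Y, ∑ S ∈ Z.powerset, f S
      = ∑ S, ∑ _Z ∈ Ici (Y ∪ S), f S := sum_comm' fun Z S => by simp [union_subset_iff, and_comm]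
    _ = ∑ S ∈ univ.filter (Y ∪ · = univ), f S := by
        simp only [sum_const, nsmul_eq_mul, natCast_card_Ici_finset, ite_mul, one_mul, zero_mul,
          sum_ite, mul_zero, add_zero]
    _ = ∑ T ∈ Y.powerset, f Tᶜ := by
        refine sum_nbij' compl compl (fun S hS => ?_) (fun T hT => ?_) (fun S _ => compl_compl S)
          (fun T _ => compl_compl T) fun S _ => by rw [compl_compl]
        · have hcod : Codisjoint Y S := codisjoint_iff.2 (mem_filter.1 hS).2
          exact mem_powerset.2 (codisjoint_iff_compl_le_left.1 hcod)
        · have hcod : Codisjoint Y Tᶜ := codisjoint_iff_compl_le_left.2 (by simpa using hT)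
          exact mem_filter.2 ⟨mem_univ _, codisjoint_iff.1 hcod⟩

end CharacteristicTwo

theorem det_psub_inv_add_one_eq_sum_Ici {V K : Type*} [Fintype V] [DecidableEq V] [Field K]
    [CharP K 2] (G : Matrix V V K) (hG : G.det = 1) (Y : Finset V) :
    (psub (G⁻¹ + 1) Y).det = ∑ Z ∈ Ici Y, (psub (G + 1) Z).det := by
  simp only [det_psub_add_one, sum_Ici_sum_powerset_eq_sum_powerset_compl]
  refine sum_congr rfl fun T _ => ?_
  simpa [hG] using det_mul_det_psub_inv G (hG ▸ isUnit_one) T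

theorem maximal_eq_one_of_eq_sum_Ici {α : Type*} [PartialOrder α] [LocallyFiniteOrderTop α]
    {f g : α → ZMod 2} (hg : ∀ a, g a = ∑ b ∈ Ici a, f b) {a : α} (ha : Maximal (f · = 1) a) :
    Maximal (g · = 1) a := by
  have hzero : ∀ ⦃b⦄, a < b → f b = 0 := fun b hab =>
    (by decide : ∀ x : ZMod 2, x ≠ 1 → x = 0) _ (ha.not_prop_of_gt hab)
  refine maximal_iff_forall_gt.2 ⟨?_, fun b hab => ?_⟩
  · rw [hg, sum_eq_single_of_mem a (mem_Ici.2 le_rfl)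
      fun b hb hba => hzero (lt_of_le_of_ne (mem_Ici.1 hb) (Ne.symm hba))]
    exact ha.prop
  · rw [hg, sum_eq_zero fun c hc => hzero (hab.trans_le (mem_Ici.1 hc))]
    decide

theorem stmt16_general {V : Type*} [Fintype V] [DecidableEq V] (G : Matrix V V (ZMod 2))
    (hdet : G.det = 1) :
    ∀ Y : Finset V,
      ((psub (G + 1) Y).det = 1 ∧ ∀ Z : Finset V, Y ⊂ Z → (psub (G + 1) Z).det ≠ 1) ↔
      ((psub (G⁻¹ + 1) Y).det = 1 ∧ ∀ Z : Finset V, Y ⊂ Z → (psub (G⁻¹ + 1) Z).det ≠ 1) := by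
  have transfer : ∀ H : Matrix V V (ZMod 2), H.det = 1 → ∀ Y,
      Maximal (fun Y => (psub (H + 1) Y).det = 1) Y →
        Maximal (fun Y => (psub (H⁻¹ + 1) Y).det = 1) Y :=
    fun H hH _ => maximal_eq_one_of_eq_sum_Ici (det_psub_inv_add_one_eq_sum_Ici H hH)
  have hdet_inv : G⁻¹.det = 1 := by simp [det_nonsing_inv, hdet]
  have hinv_inv : G⁻¹⁻¹ = G := nonsing_inv_nonsing_inv G (hdet ▸ isUnit_one)
  intro Y
  calc _ ↔ Maximal (fun Y => (psub (G + 1) Y).det = 1) Y := maximal_iff_forall_gt.symm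
    _ ↔ Maximal (fun Y => (psub (G⁻¹ + 1) Y).det = 1) Y :=
      ⟨transfer G hdet Y, fun h => hinv_inv ▸ transfer G⁻¹ hdet_inv Y h⟩
    _ ↔ _ := maximal_iff_forall_gt

theorem stmt16 {V : Type*} [Fintype V] [DecidableEq V] (G : Matrix V V (ZMod 2))
    (hG : G.IsSymm) (hdet : G.det = 1) :
    ∀ Y : Finset V,
      ((psub (G + 1) Y).det = 1 ∧ ∀ Z : Finset V, Y ⊂ Z → (psub (G + 1) Z).det ≠ 1) ↔
      ((psub (G⁻¹ + 1) Y).det = 1 ∧ ∀ Z : Finset V, Y ⊂ Z → (psub (G⁻¹ + 1) Z).det ≠ 1) :=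
  stmt16_general G hdet
end
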